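/- (Proposition 1, eDT-II part.) Let α, β ∈ A₁, and assume the adjoint linear-problem data at p₂: p₂ ∈ A₀ is invertible with Dp₂ = 0; f₂, g₂ ∈ A₀ with f₂ invertible and σ₂ ∈ A₁ satisfy Df₂ = −g₂β, Dg₂ = −f₂α − p₂σ₂, Dσ₂ = p₂g₂; set y₂ = g₂f₂⁻¹ and Ω₂ = σ₂f₂⁻¹. Define α₂ = p₂⁻¹Ω₂ and β₂ = β_x(1 + α₂β) + β((Dα₂)(Dβ) − p₂²). Then Dα₂ = y₂(1 + p₂⁻¹βΩ₂), the first Bäcklund relation α₂,ₓ = α(α₂β − 1) + α₂((Dα₂)(Dβ) − p₂²) holds automatically, and consequently W₂ := E₂(λ, p₂; α₂, β) satisfies (DW₂) + W₂†·L(λ; α, β) − L(λ; α₂, β₂)·W₂ = 0 identically in λ; i.e. Ψ ↦ W₂Ψ is a Darboux transformation of the linear problem DΨ = L(λ; α, β)Ψ. -/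

import Mathlib

open Polynomial Matrix

/-- A supercommutative superalgebra `A = A₀ ⊕ A₁` over `ℂ`. -/
structure SuperAlgebra (A : Type*) [Ring A] [Algebra ℂ A] where
  A0 : Submodule ℂ A
  A1 : Submodule ℂ A
  isCompl : IsCompl A0 A1
  algebraMap_mem : ∀ c : ℂ, algebraMap ℂ A c ∈ A0
  mul_mem00 : ∀ {a b : A}, a ∈ A0 → b ∈ A0 → a * b ∈ A0
  mul_mem01 : ∀ {a b : A}, a ∈ A0 → b ∈ A1 → a * b ∈ A1
  mul_mem10 : ∀ {a b : A}, a ∈ A1 → b ∈ A0 → a * b ∈ A1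
  mul_mem11 : ∀ {a b : A}, a ∈ A1 → b ∈ A1 → a * b ∈ A0
  even_comm : ∀ {a : A}, a ∈ A0 → ∀ b : A, a * b = b * a
  odd_anticomm : ∀ {a b : A}, a ∈ A1 → b ∈ A1 → a * b = -(b * a)

/-- An odd superderivation `D` on a superalgebra: `D(ab) = (Da)b + a†(Db)`. -/
structure OddDerivation {A : Type*} [Ring A] [Algebra ℂ A] (S : SuperAlgebra A) where
  D : A →ₗ[ℂ] A
  map_even : ∀ {a : A}, a ∈ S.A0 → D a ∈ S.A1
  map_odd : ∀ {a : A}, a ∈ S.A1 → D a ∈ S.A0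
  leibniz_even : ∀ {a : A}, a ∈ S.A0 → ∀ b : A, D (a * b) = D a * b + a * D b
  leibniz_odd : ∀ {a : A}, a ∈ S.A1 → ∀ b : A, D (a * b) = D a * b - a * D b

/-- An even (parity preserving) `ℂ`-linear derivation on a superalgebra. -/
structure EvenDerivation {A : Type*} [Ring A] [Algebra ℂ A] (S : SuperAlgebra A) where
  D : A →ₗ[ℂ] A
  map_even : ∀ {a : A}, a ∈ S.A0 → D a ∈ S.A0
  map_odd : ∀ {a : A}, a ∈ S.A1 → D a ∈ S.A1
  leibniz : ∀ a b : A, D (a * b) = D a * b + a * D b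

/-- Apply a map coefficientwise to a polynomial (extension of a derivation to
polynomials in the central even indeterminate `λ = X`). -/
noncomputable def cwise {A : Type*} [Ring A] (f : A → A) (P : Polynomial A) : Polynomial A :=
  P.sum fun n a => Polynomial.monomial n (f a)

/-- The entrywise super-parity involution `M ↦ M†` for `3 × 3` matrices having the
standard parity pattern (even entries at `(1,1), (1,2), (2,1), (2,2), (3,3)`; odd entries
at `(1,3), (2,3), (3,1), (3,2)`): it negates exactly the odd positions. -/
def sdag {R : Type*} [Ring R] (M : Matrix (Fin 3) (Fin 3) R) : Matrix (Fin 3) (Fin 3) R :=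
  Matrix.of fun i j => if (i = 2 ∧ j ≠ 2) ∨ (i ≠ 2 ∧ j = 2) then -M i j else M i j

/-- The SUSY AKNS spectral matrix `L(λ; α, β)`, with rows `[0, α, 0], [β, 0, λ], [0, λ, 0]`. -/
def Lgen {R : Type*} [Ring R] (lam a b : R) : Matrix (Fin 3) (Fin 3) R :=
  !![0, a, 0; b, 0, lam; 0, lam, 0]

/-- `L(λ; α, β)` with entries polynomial in the indeterminate `λ = X`. -/
noncomputable def Lpoly {A : Type*} [Ring A] (a b : A) : Matrix (Fin 3) (Fin 3) (Polynomial A) :=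
  Lgen (X : Polynomial A) (C a) (C b)

/-- The elementary Darboux matrix `E₁(λ, p; a, b)` (the gauge matrix of eDT-I), with
`da, db` standing for `Da, Db`. -/
def E1gen {R : Type*} [Ring R] (lam p a b da db : R) : Matrix (Fin 3) (Fin 3) R :=
  !![lam ^ 2 + (1 + a * b) * (da * db - p ^ 2), -da, lam * a;
     -db, 1 - a * b, 0;
     -(lam * b), 0, 1]

/-- The elementary Darboux matrix `E₂(λ, p; a, b)` (the gauge matrix of eDT-II). -/
def E2gen {R : Type*} [Ring R] (lam p a b da db : R) : Matrix (Fin 3) (Fin 3) R :=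
  !![1 - a * b, da, -(lam * a);
     db, (1 + a * b) * (lam ^ 2 - p ^ 2 + da * db), -(lam * (a * db));
     lam * b, lam * (b * da), lam ^ 2 * (1 + a * b) - p ^ 2]

/-- `E₁(λ, p; a, b)` with entries polynomial in `λ = X`. -/
noncomputable def E1poly {A : Type*} [Ring A] (D : A → A) (p a b : A) :
    Matrix (Fin 3) (Fin 3) (Polynomial A) :=
  E1gen (X : Polynomial A) (C p) (C a) (C b) (C (D a)) (C (D b))

/-- `E₂(λ, p; a, b)` with entries polynomial in `λ = X`. -/
noncomputable def E2poly {A : Type*} [Ring A] (D : A → A) (p a b : A) :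
    Matrix (Fin 3) (Fin 3) (Polynomial A) :=
  E2gen (X : Polynomial A) (C p) (C a) (C b) (C (D a)) (C (D b))

/-!
Dividing the adjoint solution `(f₂, g₂, σ₂)` by `f₂` turns the adjoint linear problem into the
Riccati system `Dy₂ = -α - p₂Ω₂ + y₂²β`, `DΩ₂ = p₂y₂ + y₂βΩ₂`; differentiating `α₂ = p₂⁻¹Ω₂`
along it once gives `Dα₂`, twice the Bäcklund relation. The Darboux condition is an identity of
`3 × 3` matrices over `A[λ]` that uses only the Bäcklund relation, the definition of `β₂`, and
that `λ, p₂, Dα₂, Dβ` are central while `α, β, α₂, D²β` anticommute and square to zero, so it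
holds in any ring with these rules. There, as in the scalar identities, the central elements are
treated as scalars of the commutative centre, which turns each identity into a linear one over
the centre between products of odd elements taken in a fixed order.
-/

theorem Subring.center_coe_eq_smul_one {R : Type*} [Ring R] (k : Subring.center R) :
    (k : R) = k • (1 : R) :=
  (mul_one _).symm

theorem mul_left_anticomm {R : Type*} [Ring R] {x y : R} (h : x * y = -(y * x)) (t : R) :
    x * (y * t) = -(y * (x * t)) := by
  rw [← mul_assoc, h, neg_mul, mul_assoc]

theorem mul_left_mul_self_eq_zero {R : Type*} [Ring R] {x : R} (h : x * x = 0) (t : R) :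
    x * (x * t) = 0 := by
  rw [← mul_assoc, h, zero_mul]

theorem Polynomial.X_mem_center {R : Type*} [Ring R] : (X : R[X]) ∈ Subring.center R[X] :=
  Subring.mem_center_iff.2 fun P => (commute_X P).symm.eq

theorem Polynomial.C_mem_center {R : Type*} [Ring R] {a : R} (ha : a ∈ Subring.center R) :
    C a ∈ Subring.center R[X] :=
  Subring.mem_center_iff.2 fun P => Polynomial.ext fun n => by
    rw [coeff_mul_C, coeff_C_mul, Subring.mem_center_iff.1 ha]

namespace SuperAlgebra

variable {A : Type*} [Ring A] [Algebra ℂ A] (S : SuperAlgebra A)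

theorem one_mem_A0 : (1 : A) ∈ S.A0 := by
  simpa using S.algebraMap_mem 1

theorem mem_center_of_mem_A0 {a : A} (ha : a ∈ S.A0) : a ∈ Subring.center A :=
  Subring.mem_center_iff.2 fun b => (S.even_comm ha b).symm

theorem mul_self_eq_zero_of_mem_A1 {x : A} (hx : x ∈ S.A1) : x * x = 0 := by
  have h : (2 : ℂ) • (x * x) = 0 := by
    rw [two_smul]
    nth_rw 1 [S.odd_anticomm hx hx]
    exact neg_add_cancel _
  exact (smul_eq_zero.1 h).resolve_left two_ne_zero

theorem anticomm_of_mem_image_C :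
    ∀ x ∈ C '' (S.A1 : Set A), ∀ y ∈ C '' (S.A1 : Set A), x * y = -(y * x) := by
  rintro _ ⟨u, hu, rfl⟩ _ ⟨v, hv, rfl⟩
  rw [← C_mul, ← C_mul, S.odd_anticomm hu hv, C_neg]

theorem mul_self_eq_zero_of_mem_image_C : ∀ x ∈ C '' (S.A1 : Set A), x * x = 0 := by
  rintro _ ⟨u, hu, rfl⟩
  rw [← C_mul, S.mul_self_eq_zero_of_mem_A1 hu, C_0]

theorem mem_A0_of_mul_eq_one {u v : A} (hu : u ∈ S.A0) (huv : u * v = 1) (hvu : v * u = 1) :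
    v ∈ S.A0 := by
  obtain ⟨⟨v₀, hv₀⟩, ⟨v₁, hv₁⟩, rfl, -⟩ := Submodule.existsUnique_add_of_isCompl S.isCompl v
  have hodd : u * v₁ ∈ S.A1 := S.mul_mem01 hu hv₁
  have heven : u * v₁ ∈ S.A0 := by
    rw [show u * v₁ = 1 - u * v₀ by rw [← huv, mul_add, add_sub_cancel_left]]
    exact S.A0.sub_mem S.one_mem_A0 (S.mul_mem00 hu hv₀)
  have hzero : u * v₁ = 0 := Submodule.disjoint_def.1 S.isCompl.disjoint _ heven hodd
  have hv₁ : v₁ = 0 := by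
    rw [← one_mul v₁, ← hvu, mul_assoc, hzero, mul_zero]
  simpa [hv₁] using hv₀

end SuperAlgebra

section Cwise

variable {A : Type*} [Ring A]

theorem cwise_zero (g : A → A) : cwise g (0 : A[X]) = 0 := by
  simp [cwise]

variable {F : Type*} [FunLike F A A] [AddMonoidHomClass F A A] (f : F)

theorem cwise_add (P Q : A[X]) : cwise f (P + Q) = cwise f P + cwise f Q :=
  Polynomial.sum_add_index P Q _ (by simp) (by simp)

theorem cwise_monomial (n : ℕ) (a : A) : cwise f (monomial n a) = monomial n (f a) :=
  Polynomial.sum_monomial_index a _ (by simp)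

theorem cwise_neg (P : A[X]) : cwise f (-P) = -cwise f P := by
  rw [eq_neg_iff_add_eq_zero, ← cwise_add, neg_add_cancel, cwise_zero]

theorem cwise_sub (P Q : A[X]) : cwise f (P - Q) = cwise f P - cwise f Q := by
  rw [sub_eq_add_neg, cwise_add, cwise_neg, sub_eq_add_neg]

theorem cwise_C (a : A) : cwise f (C a) = C (f a) := by
  rw [← monomial_zero_left, cwise_monomial, monomial_zero_left]

theorem cwise_X_mul (P : A[X]) : cwise f (X * P) = X * cwise f P := by
  induction P using Polynomial.induction_on' with
  | add P Q hP hQ => rw [mul_add, cwise_add, cwise_add, hP, hQ, mul_add]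
  | monomial n a => rw [X_mul_monomial, cwise_monomial, cwise_monomial, X_mul_monomial]

end Cwise

namespace OddDerivation

variable {A : Type*} [Ring A] [Algebra ℂ A] {S : SuperAlgebra A} (𝒟 : OddDerivation S)

theorem map_one : 𝒟.D 1 = 0 := by
  simpa using 𝒟.leibniz_even S.one_mem_A0 1

theorem map_of_mul_eq_one {u v : A} (hu : u ∈ S.A0) (huv : u * v = 1) (hvu : v * u = 1) :
    𝒟.D v = -(v * 𝒟.D u * v) := by
  have h : u * 𝒟.D v = -(𝒟.D u * v) := by
    rw [eq_neg_iff_add_eq_zero, add_comm, ← 𝒟.leibniz_even hu, huv, 𝒟.map_one]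
  rw [← one_mul (𝒟.D v), ← hvu, mul_assoc, h, mul_neg, mul_assoc]

theorem riccati_of_adjoint {α β p f g σ finv : A} (hβ : β ∈ S.A1) (hp : p ∈ S.A0)
    (hf : f ∈ S.A0) (hg : g ∈ S.A0) (hσ : σ ∈ S.A1) (hffinv : f * finv = 1)
    (hfinvf : finv * f = 1) (hDf : 𝒟.D f = -(g * β)) (hDg : 𝒟.D g = -(f * α) - p * σ)
    (hDσ : 𝒟.D σ = p * g) :
    𝒟.D (g * finv) = -α - p * (σ * finv) + (g * finv) ^ 2 * β ∧
      𝒟.D (σ * finv) = p * (g * finv) + g * finv * β * (σ * finv) := by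
  have hfinv := S.mem_A0_of_mul_eq_one hf hffinv hfinvf
  rw [𝒟.leibniz_even hg, 𝒟.leibniz_odd hσ, 𝒟.map_of_mul_eq_one hf hffinv hfinvf, hDg, hDσ, hDf]
  have hσβ := S.odd_anticomm hσ hβ
  lift p to Subring.center A using S.mem_center_of_mem_A0 hp
  lift f to Subring.center A using S.mem_center_of_mem_A0 hf
  lift g to Subring.center A using S.mem_center_of_mem_A0 hg
  lift finv to Subring.center A using S.mem_center_of_mem_A0 hfinv
  have hK : f * finv = 1 := Subtype.ext hffinv
  simp only [Subring.center_coe_eq_smul_one, pow_two, mul_neg, smul_mul_assoc, mul_smul_comm,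
    one_mul, mul_one, hσβ]
  exact ⟨by linear_combination (norm := module) hK.symm • α, by module⟩

theorem map_inv_mul_of_riccati {β p q y Ω : A} (hp : p ∈ S.A0) (hDp : 𝒟.D p = 0)
    (hpq : p * q = 1) (hqp : q * p = 1) (hy : y ∈ S.A0) (hDΩ : 𝒟.D Ω = p * y + y * β * Ω) :
    𝒟.D (q * Ω) = y * (1 + q * β * Ω) := by
  have hq := S.mem_A0_of_mul_eq_one hp hpq hqp
  rw [𝒟.leibniz_even hq, 𝒟.map_of_mul_eq_one hp hpq hqp, hDp, hDΩ]
  lift p to Subring.center A using S.mem_center_of_mem_A0 hp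
  lift q to Subring.center A using S.mem_center_of_mem_A0 hq
  lift y to Subring.center A using S.mem_center_of_mem_A0 hy
  have hK : q * p = 1 := Subtype.ext hqp
  simp only [Subring.center_coe_eq_smul_one, mul_add, smul_mul_assoc, mul_smul_comm, one_mul,
    mul_one, mul_zero, zero_mul, neg_zero, smul_zero, zero_add]
  linear_combination (norm := module) hK • y • (1 : A)

theorem backlund_of_riccati {α β p q y Ω : A} (hβ : β ∈ S.A1)
    (hp : p ∈ S.A0) (hDp : 𝒟.D p = 0) (hpq : p * q = 1) (hqp : q * p = 1) (hy : y ∈ S.A0)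
    (hΩ : Ω ∈ S.A1) (hDy : 𝒟.D y = -α - p * Ω + y ^ 2 * β)
    (hDΩ : 𝒟.D Ω = p * y + y * β * Ω) :
    𝒟.D (𝒟.D (q * Ω)) = α * (q * Ω * β - 1) + q * Ω * (𝒟.D (q * Ω) * 𝒟.D β - p ^ 2) := by
  have hq := S.mem_A0_of_mul_eq_one hp hpq hqp
  have hDq : 𝒟.D q = 0 := by
    rw [𝒟.map_of_mul_eq_one hp hpq hqp, hDp, mul_zero, zero_mul, neg_zero]
  rw [𝒟.map_inv_mul_of_riccati hp hDp hpq hqp hy hDΩ, 𝒟.leibniz_even hy, map_add, 𝒟.map_one,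
    𝒟.leibniz_odd (S.mul_mem01 hq hβ), 𝒟.leibniz_even hq, hDq, hDy, hDΩ]
  have hΩβ := S.odd_anticomm hΩ hβ
  have hΩΩ := S.mul_self_eq_zero_of_mem_A1 hΩ
  lift p to Subring.center A using S.mem_center_of_mem_A0 hp
  lift q to Subring.center A using S.mem_center_of_mem_A0 hq
  lift y to Subring.center A using S.mem_center_of_mem_A0 hy
  obtain ⟨db, hdb⟩ : ∃ db : Subring.center A, (db : A) = 𝒟.D β :=
    ⟨⟨_, S.mem_center_of_mem_A0 (𝒟.map_odd hβ)⟩, rfl⟩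
  rw [← hdb]
  have hK : q * p = 1 := Subtype.ext hqp
  simp only [Subring.center_coe_eq_smul_one, pow_two, mul_add, add_mul, mul_sub, sub_mul, mul_neg,
    neg_mul, smul_mul_assoc, mul_smul_comm, one_mul, mul_one, mul_zero, zero_mul, neg_zero,
    smul_zero, zero_add, add_zero, sub_zero, hΩβ, hΩΩ, mul_left_anticomm hΩβ]
  linear_combination (norm := module) hK • p • Ω - hK • (y ^ 2) • β

theorem cwise_C_mul_of_mem_A0 {c : A} (hc : c ∈ S.A0) (P : A[X]) :
    cwise 𝒟.D (C c * P) = C (𝒟.D c) * P + C c * cwise 𝒟.D P := by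
  induction P using Polynomial.induction_on' with
  | add P Q hP hQ => rw [mul_add, cwise_add, cwise_add, hP, hQ]; noncomm_ring
  | monomial n a => simp only [C_mul_monomial, cwise_monomial, 𝒟.leibniz_even hc, map_add]

theorem cwise_C_mul_of_mem_A1 {c : A} (hc : c ∈ S.A1) (P : A[X]) :
    cwise 𝒟.D (C c * P) = C (𝒟.D c) * P - C c * cwise 𝒟.D P := by
  induction P using Polynomial.induction_on' with
  | add P Q hP hQ => rw [mul_add, cwise_add, cwise_add, hP, hQ]; noncomm_ring
  | monomial n a => simp only [C_mul_monomial, cwise_monomial, 𝒟.leibniz_odd hc, map_sub]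

theorem cwise_one : cwise 𝒟.D (1 : A[X]) = 0 := by
  rw [← C_1, cwise_C, 𝒟.map_one, C_0]

theorem cwise_X : cwise 𝒟.D (X : A[X]) = 0 := by
  rw [← mul_one X, cwise_X_mul, cwise_one, mul_zero]

end OddDerivation

/-- The entrywise derivative of `E2gen lam p a b da db` for an odd derivation `D` with
`D lam = D p = 0`, where `dda`, `ddb` stand for `D(Da)`, `D(Db)`. -/
def E2genDeriv {R : Type*} [Ring R] (lam p a b da db dda ddb : R) : Matrix (Fin 3) (Fin 3) R :=
  !![a * db - da * b, dda, -(lam * da);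
     ddb, (da * b - a * db) * (lam ^ 2 - p ^ 2 + da * db) + (1 + a * b) * (dda * db + da * ddb),
       -(lam * (da * db - a * ddb));
     lam * db, lam * (db * da - b * dda), lam ^ 2 * (da * b - a * db)]

theorem OddDerivation.E2poly_map_cwise {A : Type*} [Ring A] [Algebra ℂ A] {S : SuperAlgebra A}
    (𝒟 : OddDerivation S) {p a b : A} (hp : p ∈ S.A0) (hDp : 𝒟.D p = 0) (ha : a ∈ S.A1)
    (hb : b ∈ S.A1) :
    (E2poly (fun x => 𝒟.D x) p a b).map (cwise fun x => 𝒟.D x) =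
      E2genDeriv X (C p) (C a) (C b) (C (𝒟.D a)) (C (𝒟.D b)) (C (𝒟.D (𝒟.D a)))
        (C (𝒟.D (𝒟.D b))) := by
  have hda := 𝒟.map_odd ha
  ext i j : 1
  fin_cases i <;> fin_cases j <;>
    simp only [E2poly, E2gen, E2genDeriv, Matrix.map_apply, Matrix.of_apply, Matrix.cons_val',
      Matrix.cons_val_zero, Matrix.cons_val_one, Matrix.cons_val, Matrix.cons_val_fin_one,
      Fin.isValue, Fin.mk_one, Fin.zero_eta, Fin.reduceFinMk] <;>
    simp only [pow_two, mul_add, add_mul, mul_sub, sub_mul, mul_assoc, one_mul, mul_one, cwise_add,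
      cwise_sub, cwise_neg, cwise_X_mul, 𝒟.cwise_X, 𝒟.cwise_one, cwise_C, 𝒟.cwise_C_mul_of_mem_A0,
      𝒟.cwise_C_mul_of_mem_A1, ha, hb, hp, hda, hDp, map_zero, mul_zero, zero_mul, add_zero,
      zero_add, sub_zero, zero_sub] <;>
    abel

theorem E2gen_darboux_identity {R : Type*} [Ring R] (V : Set R)
    (hV : ∀ x ∈ V, ∀ y ∈ V, x * y = -(y * x)) (hV₀ : ∀ x ∈ V, x * x = 0)
    {lam p da db : R} (hlam : lam ∈ Subring.center R) (hp : p ∈ Subring.center R)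
    (hda : da ∈ Subring.center R) (hdb : db ∈ Subring.center R)
    {a b al ddb : R} (ha : a ∈ V) (hb : b ∈ V) (hal : al ∈ V) (hddb : ddb ∈ V) :
    E2genDeriv lam p a b da db (al * (a * b - 1) + a * (da * db - p ^ 2)) ddb
      + sdag (E2gen lam p a b da db) * Lgen lam al b
      - Lgen lam a (ddb * (1 + a * b) + b * (da * db - p ^ 2)) * E2gen lam p a b da db = 0 := by
  lift lam to Subring.center R using hlam
  lift p to Subring.center R using hp
  lift da to Subring.center R using hda
  lift db to Subring.center R using hdb
  have hba := hV b hb a ha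
  have hala := hV al hal a ha
  have halb := hV al hal b hb
  have hddba := hV ddb hddb a ha
  have hddbb := hV ddb hddb b hb
  have haa := hV₀ a ha
  have hbb := hV₀ b hb
  ext i j
  fin_cases i <;> fin_cases j <;>
  · simp only [E2genDeriv, E2gen, Lgen, sdag, Matrix.add_apply, Matrix.sub_apply, Matrix.zero_apply,
      Matrix.mul_apply, Fin.sum_univ_three, Matrix.of_apply, Matrix.cons_val', Matrix.cons_val_zero,
      Matrix.cons_val_one, Matrix.cons_val, Matrix.cons_val_fin_one, Fin.isValue, Fin.mk_one,
      Fin.zero_eta, Fin.reduceFinMk, Fin.reduceEq, ne_eq, not_true_eq_false, not_false_eq_true,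
      true_and, false_and, or_false, false_or, ↓reduceIte]
    simp only [Subring.center_coe_eq_smul_one, pow_two, mul_add, add_mul, mul_sub, sub_mul, mul_neg,
      neg_mul, smul_mul_assoc, mul_smul_comm, one_mul, mul_one, mul_assoc, hba, halb, hddba, hddbb,
      haa, hbb, mul_left_anticomm hba, mul_left_anticomm hala, mul_left_anticomm hddba,
      mul_left_mul_self_eq_zero haa, mul_left_mul_self_eq_zero hbb, smul_zero, neg_zero,
      mul_zero, zero_mul]
    module

/-- **Proposition 1, eDT-II part.** With `α₂ = p₂⁻¹Ω₂` and
`β₂ = β_x(1 + α₂β) + β((Dα₂)(Dβ) − p₂²)` built from a solution `φ₂ = (f₂, g₂, σ₂)` of the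
adjoint linear problem at `λ = p₂`, one has `Dα₂ = y₂(1 + p₂⁻¹βΩ₂)`, the first Bäcklund
relation `α₂,ₓ = α(α₂β − 1) + α₂((Dα₂)(Dβ) − p₂²)` holds automatically, and
`W₂ = E₂(λ, p₂; α₂, β)` satisfies the Darboux covariance condition
`(DW₂) + W₂†·L(λ; α, β) − L(λ; α₂, β₂)·W₂ = 0` identically in `λ`. -/
theorem eDT2_is_darboux {A : Type*} [Ring A] [Algebra ℂ A]
    (S : SuperAlgebra A) (𝒟 : OddDerivation S)
    (α β : A) (hα : α ∈ S.A1) (hβ : β ∈ S.A1)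
    (p₂ p2inv : A) (hp₂ : p₂ ∈ S.A0) (hDp₂ : 𝒟.D p₂ = 0)
    (hp2inv : p₂ * p2inv = 1 ∧ p2inv * p₂ = 1)
    (f₂ g₂ σ₂ : A) (hf₂ : f₂ ∈ S.A0) (hg₂ : g₂ ∈ S.A0) (hσ₂ : σ₂ ∈ S.A1)
    (f2inv : A) (hf2inv : f₂ * f2inv = 1 ∧ f2inv * f₂ = 1)
    (hDf₂ : 𝒟.D f₂ = -(g₂ * β)) (hDg₂ : 𝒟.D g₂ = -(f₂ * α) - p₂ * σ₂)
    (hDσ₂ : 𝒟.D σ₂ = p₂ * g₂)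
    (y₂ Ω₂ α₂ β₂ : A) (hy₂ : y₂ = g₂ * f2inv) (hΩ₂ : Ω₂ = σ₂ * f2inv)
    (hα₂ : α₂ = p2inv * Ω₂)
    (hβ₂ : β₂ = (𝒟.D (𝒟.D β)) * (1 + α₂ * β) + β * ((𝒟.D α₂) * (𝒟.D β) - p₂ ^ 2)) :
    (𝒟.D α₂ = y₂ * (1 + p2inv * β * Ω₂))
      ∧ (𝒟.D (𝒟.D α₂) = α * (α₂ * β - 1) + α₂ * ((𝒟.D α₂) * (𝒟.D β) - p₂ ^ 2))
      ∧ ((E2poly (fun x => 𝒟.D x) p₂ α₂ β).map (cwise fun x => 𝒟.D x)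
          + sdag (E2poly (fun x => 𝒟.D x) p₂ α₂ β) * Lpoly α β
          - Lpoly α₂ β₂ * E2poly (fun x => 𝒟.D x) p₂ α₂ β = 0) := by
  obtain ⟨hpq, hqp⟩ := hp2inv
  obtain ⟨hff, hfif⟩ := hf2inv
  have hf2inv₀ := S.mem_A0_of_mul_eq_one hf₂ hff hfif
  have hy₂₀ : y₂ ∈ S.A0 := hy₂ ▸ S.mul_mem00 hg₂ hf2inv₀
  have hΩ₂₁ : Ω₂ ∈ S.A1 := hΩ₂ ▸ S.mul_mem10 hσ₂ hf2inv₀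
  have hα₂₁ : α₂ ∈ S.A1 := hα₂ ▸ S.mul_mem01 (S.mem_A0_of_mul_eq_one hp₂ hpq hqp) hΩ₂₁
  obtain ⟨hDy₂, hDΩ₂⟩ := 𝒟.riccati_of_adjoint hβ hp₂ hf₂ hg₂ hσ₂ hff hfif hDf₂ hDg₂ hDσ₂
  rw [← hy₂, ← hΩ₂] at hDy₂ hDΩ₂
  have hDα₂ : 𝒟.D α₂ = y₂ * (1 + p2inv * β * Ω₂) := by
    rw [hα₂, 𝒟.map_inv_mul_of_riccati hp₂ hDp₂ hpq hqp hy₂₀ hDΩ₂]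
  have hDDα₂ : 𝒟.D (𝒟.D α₂) = α * (α₂ * β - 1) + α₂ * (𝒟.D α₂ * 𝒟.D β - p₂ ^ 2) := by
    rw [hα₂, 𝒟.backlund_of_riccati hβ hp₂ hDp₂ hpq hqp hy₂₀ hΩ₂₁ hDy₂ hDΩ₂]
  refine ⟨hDα₂, hDDα₂, ?_⟩
  rw [𝒟.E2poly_map_cwise hp₂ hDp₂ hα₂₁ hβ, hDDα₂, hβ₂]
  have hcentral {a : A} (ha : a ∈ S.A0) := C_mem_center (S.mem_center_of_mem_A0 ha)
  have hodd {a : A} (ha : a ∈ S.A1) : C a ∈ C '' (S.A1 : Set A) := Set.mem_image_of_mem C ha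
  simpa only [E2poly, Lpoly, map_add, map_sub, map_mul, map_one, map_pow] using
    E2gen_darboux_identity _ S.anticomm_of_mem_image_C S.mul_self_eq_zero_of_mem_image_C
      X_mem_center (hcentral hp₂) (hcentral (𝒟.map_odd hα₂₁)) (hcentral (𝒟.map_odd hβ))
      (hodd hα₂₁) (hodd hβ) (hodd hα) (hodd (𝒟.map_even (𝒟.map_odd hβ)))
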